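/- Let u be real-valued in L^2(T) and let (f_n)_{n≥0} be an orthonormal basis of eigenfunctions of L_u with L_u f_n = λ_n f_n. Then for all k, p ≥ 0, (λ_p - λ_k - 1)⟨f_p | S f_k⟩ = -⟨f_p|1⟩⟨u|S f_k⟩. -/

import Mathlib

open MeasureTheory Complex Real
open scoped ComplexInnerProductSpace

noncomputable section

namespace BO

/-- The circle `ℝ/2πℤ`. -/
abbrev Circ := AddCircle (2 * π)

instance : Fact (0 < 2 * π) := ⟨by positivity⟩

/-- Normalized Haar measure on the circle (total mass `1`, i.e. `(1/2π) dx`). -/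
abbrev μ : Measure Circ := AddCircle.haarAddCircle

/-- The inner product `⟨f|g⟩ = (1/2π)∫₀^{2π} f(x) conj (g x) dx`. -/
def ip (f g : Circ → ℂ) : ℂ := ∫ x, f x * (starRingEnd ℂ) (g x) ∂μ

/-- The constant function `1`. -/
def one : Circ → ℂ := fun _ => 1

/-- `f` belongs to the Hardy space `L²₊`: `f ∈ L²` and all negative Fourier modes vanish. -/
def Hardy (f : Circ → ℂ) : Prop :=
  MemLp f 2 μ ∧ ∀ n : ℤ, n < 0 → fourierCoeff f n = 0

/-- `f` belongs to the Sobolev space `H¹`. -/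
def H1 (f : Circ → ℂ) : Prop :=
  MemLp f 2 μ ∧ Summable fun n : ℤ => (n : ℝ) ^ 2 * ‖fourierCoeff f n‖ ^ 2

/-- `P` is the Szegő projector `Π : L² → L²₊`. -/
def IsSzego (P : (Circ → ℂ) → Circ → ℂ) : Prop :=
  ∀ f, MemLp f 2 μ → MemLp (P f) 2 μ ∧
    ∀ n : ℤ, fourierCoeff (P f) n = if 0 ≤ n then fourierCoeff f n else 0

/-- `D` is the Fourier multiplier `-i ∂ₓ`, defined (at least) on `H¹`. -/
def IsD (D : (Circ → ℂ) → Circ → ℂ) : Prop :=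
  ∀ f, H1 f → MemLp (D f) 2 μ ∧ ∀ n : ℤ, fourierCoeff (D f) n = n * fourierCoeff f n

/-- The shift operator `(S h)(x) = e^{ix} h(x)`. -/
def shift (f : Circ → ℂ) : Circ → ℂ := fun x => fourier 1 x * f x

/-- The Toeplitz operator `T_u h = Π(u h)` with real symbol `u`. -/
def Toep (P : (Circ → ℂ) → Circ → ℂ) (u : Circ → ℝ) (f : Circ → ℂ) : Circ → ℂ :=
  P fun x => (u x : ℂ) * f x

/-- The Lax operator `L_u = D - T_u` of the Benjamin–Ono equation. -/
def Lax (P D : (Circ → ℂ) → Circ → ℂ) (u : Circ → ℝ) (f : Circ → ℂ) : Circ → ℂ :=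
  fun x => D f x - Toep P u f x

/-- Spectral data for the selfadjoint operator `L_u`: `lam` lists the eigenvalues of `L_u`
in increasing order with multiplicities, and `f` is a corresponding orthonormal basis
of eigenfunctions of the Hardy space. -/
structure EigenSystem (P D : (Circ → ℂ) → Circ → ℂ) (u : Circ → ℝ)
    (lam : ℕ → ℝ) (f : ℕ → Circ → ℂ) : Prop where
  hardy : ∀ n, Hardy (f n)
  sobolev : ∀ n, H1 (f n)
  ortho : ∀ m n, ip (f m) (f n) = if m = n then 1 else 0
  eigen : ∀ n, Lax P D u (f n) =ᵐ[μ] fun x => (lam n : ℂ) * f n x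
  mono : Monotone lam
  complete : ∀ g, Hardy g → (∀ n, ip g (f n) = 0) → g =ᵐ[μ] 0

/-! ### Auxiliary lemmas -/

lemma norm_fourier_apply (n : ℤ) (x : Circ) : ‖fourier n x‖ = 1 := Circle.norm_coe _

lemma fourierCoeff_congr_ae {g h : Circ → ℂ} (hgh : g =ᵐ[μ] h) (n : ℤ) :
    fourierCoeff g n = fourierCoeff h n :=
  integral_congr_ae (hgh.mono fun x hx => by simp [hx])

lemma fourierCoeff_shift (g : Circ → ℂ) (n : ℤ) :
    fourierCoeff (shift g) n = fourierCoeff g (n - 1) := by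
  unfold fourierCoeff shift
  congr 1
  ext t
  have h2 : fourier (-(n-1)) t = fourier (-n) t * fourier 1 t := by
    have : -(n-1) = -n + 1 := by ring
    rw [this, fourier_add]
  simp only [smul_eq_mul]
  rw [h2]
  ring

lemma memℒp_shift {g : Circ → ℂ} (hg : MemLp g 2 μ) : MemLp (shift g) 2 μ := by
  refine hg.of_le_mul (c := 1)
    (((fourier 1).continuous.aestronglyMeasurable).mul hg.aestronglyMeasurable) ?_
  filter_upwards with x
  simp [shift, norm_fourier_apply, Circle.norm_coe]

lemma fourierCoeff_sub' {F G : Circ → ℂ} (hF : Integrable F μ) (hG : Integrable G μ) (n : ℤ) :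
    fourierCoeff (fun x => F x - G x) n = fourierCoeff F n - fourierCoeff G n := by
  unfold fourierCoeff
  rw [← integral_sub]
  · congr 1; ext t; simp only [smul_eq_mul]; ring
  · exact (hF.bdd_mul (fourier (-n)).continuous.aestronglyMeasurable
      (Filter.Eventually.of_forall fun x => le_of_eq (norm_fourier_apply _ _)))
  · exact (hG.bdd_mul (fourier (-n)).continuous.aestronglyMeasurable
      (Filter.Eventually.of_forall fun x => le_of_eq (norm_fourier_apply _ _)))

lemma fourierCoeff_fourier' (i n : ℤ) :
    fourierCoeff (⇑(fourier i) : Circ → ℂ) n = if n = i then 1 else 0 := by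
  have h1 : fourierCoeff (⇑(fourier i) : Circ → ℂ) n
      = fourierCoeff (↑(@fourierLp (2*π) _ 2 _ i) : Circ → ℂ) n :=
    (fourierCoeff_congr_ae (coeFn_fourierLp 2 i).symm n)
  rw [h1, ← fourierBasis_repr, HilbertBasis.repr_apply_apply, ← coe_fourierBasis]
  have := orthonormal_iff_ite.mp (@orthonormal_fourier (2*π) _)
  rw [coe_fourierBasis]
  exact this n i

lemma hasSum_ip {g h : Circ → ℂ} (hg : MemLp g 2 μ) (hh : MemLp h 2 μ) :
    HasSum (fun n : ℤ => fourierCoeff g n * (starRingEnd ℂ) (fourierCoeff h n)) (ip g h) := by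
  set G := hg.toLp g
  set H := hh.toLp h
  have hrG : ∀ n : ℤ, fourierBasis.repr G n = fourierCoeff g n := fun n => by
    rw [fourierBasis_repr]; exact fourierCoeff_congr_ae (hg.coeFn_toLp) n
  have hrH : ∀ n : ℤ, fourierBasis.repr H n = fourierCoeff h n := fun n => by
    rw [fourierBasis_repr]; exact fourierCoeff_congr_ae (hh.coeFn_toLp) n
  have key := fourierBasis.hasSum_inner_mul_inner H G
  have h1 : (fun n : ℤ => ⟪H, fourierBasis n⟫ * ⟪fourierBasis n, G⟫)
      = fun n : ℤ => fourierCoeff g n * (starRingEnd ℂ) (fourierCoeff h n) := by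
    funext n
    rw [← inner_conj_symm (𝕜 := ℂ) H (fourierBasis n), ← fourierBasis.repr_apply_apply,
      ← fourierBasis.repr_apply_apply, hrG, hrH]
    ring
  have h2 : ⟪H, G⟫ = ip g h := by
    rw [MeasureTheory.L2.inner_def]
    unfold ip
    refine integral_congr_ae ?_
    filter_upwards [hg.coeFn_toLp, hh.coeFn_toLp] with x hx hy
    rw [RCLike.inner_apply]
    show (G x) * (starRingEnd ℂ) (H x) = _
    rw [hx, hy]
  rw [← h2, ← h1]
  exact key

lemma ae_zero_of_coeffs {g : Circ → ℂ} (hg : MemLp g 2 μ)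
    (h0 : ∀ n : ℤ, fourierCoeff g n = 0) : g =ᵐ[μ] 0 := by
  have hr : fourierBasis.repr (hg.toLp g) = 0 := by
    ext n
    rw [fourierBasis_repr]
    simpa [fourierCoeff_congr_ae (hg.coeFn_toLp) n] using h0 n
  have hG0 : hg.toLp g = 0 := by
    apply fourierBasis.repr.injective
    simp [hr]
  refine (hg.coeFn_toLp.symm).trans ?_
  rw [hG0]
  exact Lp.coeFn_zero ℂ 2 μ

lemma summable_norm_coeff {g : Circ → ℂ}
    (hsum : Summable fun n : ℤ => (n : ℝ) ^ 2 * ‖fourierCoeff g n‖ ^ 2) :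
    Summable fun n : ℤ => ‖fourierCoeff g n‖ := by
  set c := fun n : ℤ => ‖fourierCoeff g n‖ with hc
  have hmaj : Summable (fun n : ℤ =>
      (if n = 0 then c 0 else 0) + (1 / (n : ℝ) ^ 2 / 2 + (n : ℝ) ^ 2 * c n ^ 2 / 2)) := by
    refine Summable.add ?_ (Summable.add ?_ ?_)
    · exact summable_of_ne_finset_zero (s := {0}) (fun n hn => if_neg (by simpa using hn))
    · exact (summable_one_div_int_pow.mpr one_lt_two).div_const 2
    · exact hsum.div_const 2
  refine hmaj.of_nonneg_of_le (fun n => norm_nonneg _) ?_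
  intro n
  by_cases hn : n = 0
  · subst hn; simp
  · have hr : (n : ℝ) ≠ 0 := Int.cast_ne_zero.mpr hn
    have h1 : (n : ℝ) * (1 / (n : ℝ)) = 1 := mul_one_div_cancel hr
    have h2 : ((1:ℝ) / (n : ℝ)) ^ 2 = 1 / (n : ℝ) ^ 2 := by rw [div_pow, one_pow]
    have h3 := sq_nonneg ((n : ℝ) * c n - 1 / (n : ℝ))
    have hcn : (0:ℝ) ≤ c n := norm_nonneg _
    rw [if_neg hn]
    nlinarith [sq_nonneg ((n:ℝ) * c n)]

lemma bounded_of_H1 {g : Circ → ℂ} (hg2 : MemLp g 2 μ)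
    (hsum : Summable fun n : ℤ => (n : ℝ) ^ 2 * ‖fourierCoeff g n‖ ^ 2) :
    ∃ C : ℝ, ∀ᵐ x ∂μ, ‖g x‖ ≤ C := by
  have habs := summable_norm_coeff hsum
  have hs : Summable (fun n : ℤ => fourierCoeff g n • (fourier n : C(Circ, ℂ))) := by
    refine Summable.of_norm ?_
    simpa [norm_smul, fourier_norm] using habs
  set h : C(Circ, ℂ) := ∑' n : ℤ, fourierCoeff g n • (fourier n) with hh
  have hpt : ∀ x : Circ, HasSum (fun n : ℤ => fourierCoeff g n * fourier n x) (h x) := by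
    intro x
    have := (ContinuousMap.evalCLM ℂ x).hasSum hs.hasSum
    simpa using this
  have hmem : MemLp (⇑h) 2 μ :=
    MemLp.of_bound h.continuous.aestronglyMeasurable ‖h‖
      (Filter.Eventually.of_forall fun x => h.norm_coe_le_norm x)
  have hcoeff : ∀ m : ℤ, fourierCoeff (⇑h) m = fourierCoeff g m := by
    intro m
    set F : ℤ → Circ → ℂ := fun n t => fourier (-m) t * (fourierCoeff g n * fourier n t) with hF
    have hFnorm : ∀ n t, ‖F n t‖ = ‖fourierCoeff g n‖ := by
      intro n t
      rw [hF]
      simp only [norm_mul, norm_fourier_apply, one_mul, mul_one]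
    have hFint : ∀ n, Integrable (F n) μ := by
      intro n
      refine memLp_one_iff_integrable.mp
        (MemLp.of_bound ?_ ‖fourierCoeff g n‖
          (Filter.Eventually.of_forall fun t => le_of_eq (hFnorm n t)))
      exact ((fourier (-m)).continuous.aestronglyMeasurable).mul
        (aestronglyMeasurable_const.mul (fourier n).continuous.aestronglyMeasurable)
    have hFsum : Summable fun n => ∫ t, ‖F n t‖ ∂μ := by
      have e : ∀ n : ℤ, (∫ t, ‖F n t‖ ∂μ) = ‖fourierCoeff g n‖ := by
        intro n
        simp only [hFnorm]
        simp [measure_univ]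
      simp only [e]
      exact habs
    have key := hasSum_integral_of_summable_integral_norm (μ := μ) hFint hFsum
    have h2 : ∀ t, (∑' n : ℤ, F n t) = fourier (-m) t * h t := by
      intro t
      exact ((hpt t).mul_left (fourier (-m) t)).tsum_eq
    have h3 : ∀ n : ℤ, (∫ t, F n t ∂μ) = if n = m then fourierCoeff g m else 0 := by
      intro n
      have : ∀ t, F n t = fourierCoeff g n * (fourier (-m) t * fourier n t) := by
        intro t; rw [hF]; ring
      simp_rw [this]
      rw [integral_const_mul]
      have : (∫ t, fourier (-m) t * fourier n t ∂μ) = fourierCoeff (⇑(fourier n) : Circ → ℂ) m := by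
        rw [fourierCoeff]
        congr 1
      rw [this, fourierCoeff_fourier']
      by_cases hnm : n = m
      · subst hnm; simp
      · simp [hnm, Ne.symm hnm]
    have hsum2 : HasSum (fun n : ℤ => if n = m then fourierCoeff g m else 0)
        (fourierCoeff (⇑h) m) := by
      have : fourierCoeff (⇑h) m = ∫ t, (∑' n : ℤ, F n t) ∂μ := by
        rw [fourierCoeff]
        refine integral_congr_ae (Filter.Eventually.of_forall fun t => ?_)
        show (fourier (-m)) t • h t = ∑' n : ℤ, F n t
        rw [h2 t, smul_eq_mul]
      rw [this]
      have := key
      simp_rw [h3] at this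
      exact this
    exact hsum2.unique (hasSum_ite_eq m (fourierCoeff g m))
  have hzero : ∀ n : ℤ, fourierCoeff (fun x => g x - h x) n = 0 := by
    intro n
    rw [fourierCoeff_sub' (hg2.integrable one_le_two) (hmem.integrable one_le_two), hcoeff]
    ring
  have hae : (fun x => g x - h x) =ᵐ[μ] 0 :=
    ae_zero_of_coeffs ((hg2.sub hmem) : MemLp (g - ⇑h) 2 μ) hzero
  refine ⟨‖h‖, ?_⟩
  filter_upwards [hae] with x hx
  have hgx : g x = h x := by
    have : g x - h x = 0 := hx
    linear_combination this
  rw [hgx]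
  exact h.norm_coe_le_norm x

lemma memℒp_mul_of_bounded {u' g : Circ → ℂ} (hu : MemLp u' 2 μ)
    (hg : AEStronglyMeasurable g μ) {C : ℝ} (hC : ∀ᵐ x ∂μ, ‖g x‖ ≤ C) :
    MemLp (fun x => u' x * g x) 2 μ := by
  refine hu.of_le_mul (c := C) (hu.aestronglyMeasurable.mul hg) ?_
  filter_upwards [hC] with x hx
  rw [norm_mul, mul_comm (C) _]
  exact mul_le_mul_of_nonneg_left hx (norm_nonneg _)

lemma ip_one (g : Circ → ℂ) : ip g one = fourierCoeff g 0 := by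
  unfold ip one fourierCoeff
  refine integral_congr_ae (Filter.Eventually.of_forall fun t => ?_)
  simp

lemma ip_u_shift (u' g : Circ → ℂ) :
    ip u' (shift g) = (starRingEnd ℂ) (fourierCoeff (fun x => (starRingEnd ℂ) (u' x) * g x) (-1)) := by
  have key : (starRingEnd ℂ) (ip u' (shift g))
      = fourierCoeff (fun x => (starRingEnd ℂ) (u' x) * g x) (-1) := by
    unfold ip shift fourierCoeff
    rw [← integral_conj]
    refine integral_congr_ae (Filter.Eventually.of_forall fun t => ?_)
    show (starRingEnd ℂ) (u' t * (starRingEnd ℂ) (fourier 1 t * g t))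
        = fourier (-(-1)) t • ((starRingEnd ℂ) (u' t) * g t)
    simp only [map_mul, Complex.conj_conj, smul_eq_mul, neg_neg]
    ring
  rw [← key, Complex.conj_conj]

/-- For the orthonormal eigenbasis `(f_n)` of `L_u`, one has, for all
`k, p ≥ 0`, `(λ_p - λ_k - 1)⟨f_p|S f_k⟩ = -⟨f_p|1⟩⟨u|S f_k⟩`. -/
theorem eigenfunction_shift_relation (P D : (Circ → ℂ) → Circ → ℂ)
    (hP : IsSzego P) (hD : IsD D)
    (u : Circ → ℝ) (hu : MemLp (fun x => (u x : ℂ)) 2 μ)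
    (lam : ℕ → ℝ) (f : ℕ → Circ → ℂ) (hsys : EigenSystem P D u lam f) :
    ∀ k p : ℕ,
      ((lam p : ℂ) - (lam k : ℂ) - 1) * ip (f p) (shift (f k)) =
        -(ip (f p) one * ip (fun x => (u x : ℂ)) (shift (f k))) := by
  intro k p
  obtain ⟨hfp2, hfpneg⟩ := hsys.hardy p
  obtain ⟨hfk2, hfkneg⟩ := hsys.hardy k
  -- the products u·f_j are in L²
  have hU : ∀ j : ℕ, MemLp (fun x => (u x : ℂ) * f j x) 2 μ := by
    intro j
    obtain ⟨C, hC⟩ := bounded_of_H1 (hsys.sobolev j).1 (hsys.sobolev j).2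
    exact memℒp_mul_of_bounded hu (hsys.hardy j).1.aestronglyMeasurable hC
  -- the key coefficient identity for u·f_j at nonnegative modes
  have hcoefU : ∀ (j : ℕ) (n : ℤ), 0 ≤ n →
      fourierCoeff (fun x => (u x : ℂ) * f j x) n
        = ((n : ℂ) - (lam j : ℂ)) * fourierCoeff (f j) n := by
    intro j n hn
    have hPU := hP _ (hU j)
    have heig := hsys.eigen j
    have hPae : (P fun x => (u x : ℂ) * f j x) =ᵐ[μ]
        fun x => D (f j) x - (lam j : ℂ) * f j x := by
      filter_upwards [heig] with x hx
      have : D (f j) x - (P fun y => (u y : ℂ) * f j y) x = (lam j : ℂ) * f j x := hx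
      linear_combination -this
    have hDint : Integrable (D (f j)) μ := ((hD _ (hsys.sobolev j)).1).integrable one_le_two
    have hfint : Integrable (fun x => (lam j : ℂ) * f j x) μ :=
      ((hsys.hardy j).1.integrable one_le_two).const_mul _
    have e1 : fourierCoeff (P fun x => (u x : ℂ) * f j x) n
        = (n : ℂ) * fourierCoeff (f j) n - (lam j : ℂ) * fourierCoeff (f j) n := by
      rw [fourierCoeff_congr_ae hPae n, fourierCoeff_sub' hDint hfint,
        (hD _ (hsys.sobolev j)).2 n, fourierCoeff.const_mul]
    have e2 := (hPU.2 n)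
    rw [if_pos hn] at e2
    rw [← e2, e1]
    ring
  -- Parseval expansions
  have h1 : HasSum (fun n : ℤ => fourierCoeff (f p) n * (starRingEnd ℂ) (fourierCoeff (f k) (n - 1)))
      (ip (f p) (shift (f k))) := by
    have := hasSum_ip hfp2 (memℒp_shift hfk2)
    simpa only [fourierCoeff_shift] using this
  have h2 : HasSum (fun n : ℤ => ((n : ℂ) - (lam p : ℂ))
        * (fourierCoeff (f p) n * (starRingEnd ℂ) (fourierCoeff (f k) (n - 1))))
      (ip (fun x => (u x : ℂ) * f p x) (shift (f k))) := by
    have H := hasSum_ip (hU p) (memℒp_shift hfk2)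
    simp only [fourierCoeff_shift] at H
    have e : (fun n : ℤ => fourierCoeff (fun x => (u x : ℂ) * f p x) n
        * (starRingEnd ℂ) (fourierCoeff (f k) (n - 1)))
        = fun n : ℤ => ((n : ℂ) - (lam p : ℂ))
            * (fourierCoeff (f p) n * (starRingEnd ℂ) (fourierCoeff (f k) (n - 1))) := by
      funext n
      by_cases hn : 0 ≤ n
      · rw [hcoefU p n hn]
        ring
      · have hb0 : fourierCoeff (f k) (n - 1) = 0 := hfkneg _ (by omega)
        rw [hb0]
        simp
    rw [e] at H
    exact H
  have h3 : HasSum (fun n : ℤ => ((n : ℂ) - 1 - (lam k : ℂ))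
          * (fourierCoeff (f p) n * (starRingEnd ℂ) (fourierCoeff (f k) (n - 1)))
        + (if n = 0 then fourierCoeff (f p) 0
            * (starRingEnd ℂ) (fourierCoeff (fun x => (u x : ℂ) * f k x) (-1)) else 0))
      (ip (f p) (shift (fun x => (u x : ℂ) * f k x))) := by
    have H := hasSum_ip hfp2 (memℒp_shift (hU k))
    simp only [fourierCoeff_shift] at H
    have e : (fun n : ℤ => fourierCoeff (f p) n
          * (starRingEnd ℂ) (fourierCoeff (fun x => (u x : ℂ) * f k x) (n - 1)))
        = fun n : ℤ => ((n : ℂ) - 1 - (lam k : ℂ))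
            * (fourierCoeff (f p) n * (starRingEnd ℂ) (fourierCoeff (f k) (n - 1)))
          + (if n = 0 then fourierCoeff (f p) 0
              * (starRingEnd ℂ) (fourierCoeff (fun x => (u x : ℂ) * f k x) (-1)) else 0) := by
      funext n
      rcases lt_trichotomy n 0 with hneg | hzero | hpos
      · have ha0 : fourierCoeff (f p) n = 0 := hfpneg n hneg
        have hb0 : fourierCoeff (f k) (n - 1) = 0 := hfkneg _ (by omega)
        rw [ha0, hb0, if_neg (by omega)]
        simp
      · subst hzero
        have hb0 : fourierCoeff (f k) (0 - 1) = 0 := hfkneg _ (by norm_num)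
        rw [if_pos rfl, hb0]
        norm_num
      · have h0 : (0:ℤ) ≤ n - 1 := by omega
        rw [hcoefU k (n - 1) h0, if_neg (by omega), map_mul]
        have hconj : (starRingEnd ℂ) (((n - 1 : ℤ) : ℂ) - ((lam k : ℝ) : ℂ))
            = ((n - 1 : ℤ) : ℂ) - ((lam k : ℝ) : ℂ) := by
          rw [map_sub, Complex.conj_ofReal]
          norm_num
        rw [hconj]
        push_cast
        ring
    rw [e] at H
    exact H
  -- the two middle quantities agree, since u is real-valued
  have hQ : ip (fun x => (u x : ℂ) * f p x) (shift (f k))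
      = ip (f p) (shift (fun x => (u x : ℂ) * f k x)) := by
    unfold ip shift
    refine integral_congr_ae (Filter.Eventually.of_forall fun x => ?_)
    show (u x : ℂ) * f p x * (starRingEnd ℂ) (fourier 1 x * f k x)
        = f p x * (starRingEnd ℂ) (fourier 1 x * ((u x : ℂ) * f k x))
    rw [map_mul, map_mul, map_mul, Complex.conj_ofReal]
    ring
  -- subtract the δ-term from h3
  have hδ : HasSum (fun n : ℤ => if n = 0 then fourierCoeff (f p) 0
        * (starRingEnd ℂ) (fourierCoeff (fun x => (u x : ℂ) * f k x) (-1)) else 0)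
      (fourierCoeff (f p) 0
        * (starRingEnd ℂ) (fourierCoeff (fun x => (u x : ℂ) * f k x) (-1))) :=
    hasSum_ite_eq 0 _
  have h4 : HasSum (fun n : ℤ => ((n : ℂ) - 1 - (lam k : ℂ))
        * (fourierCoeff (f p) n * (starRingEnd ℂ) (fourierCoeff (f k) (n - 1))))
      (ip (f p) (shift (fun x => (u x : ℂ) * f k x)) - fourierCoeff (f p) 0
        * (starRingEnd ℂ) (fourierCoeff (fun x => (u x : ℂ) * f k x) (-1))) := by
    have H := h3.sub hδ
    have e : (fun n : ℤ => (((n : ℂ) - 1 - (lam k : ℂ))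
            * (fourierCoeff (f p) n * (starRingEnd ℂ) (fourierCoeff (f k) (n - 1)))
          + (if n = 0 then fourierCoeff (f p) 0
              * (starRingEnd ℂ) (fourierCoeff (fun x => (u x : ℂ) * f k x) (-1)) else 0))
          - (if n = 0 then fourierCoeff (f p) 0
              * (starRingEnd ℂ) (fourierCoeff (fun x => (u x : ℂ) * f k x) (-1)) else 0))
        = fun n : ℤ => ((n : ℂ) - 1 - (lam k : ℂ))
            * (fourierCoeff (f p) n * (starRingEnd ℂ) (fourierCoeff (f k) (n - 1))) := by
      funext n
      ring
    rw [e] at H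
    exact H
  -- combine everything
  have h5 : HasSum (fun n : ℤ => ((1 : ℂ) + (lam k : ℂ) - (lam p : ℂ))
        * (fourierCoeff (f p) n * (starRingEnd ℂ) (fourierCoeff (f k) (n - 1))))
      (fourierCoeff (f p) 0
        * (starRingEnd ℂ) (fourierCoeff (fun x => (u x : ℂ) * f k x) (-1))) := by
    have H := h2.sub h4
    rw [hQ] at H
    have e : (fun n : ℤ => ((n : ℂ) - (lam p : ℂ))
            * (fourierCoeff (f p) n * (starRingEnd ℂ) (fourierCoeff (f k) (n - 1)))
          - ((n : ℂ) - 1 - (lam k : ℂ))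
            * (fourierCoeff (f p) n * (starRingEnd ℂ) (fourierCoeff (f k) (n - 1))))
        = fun n : ℤ => ((1 : ℂ) + (lam k : ℂ) - (lam p : ℂ))
            * (fourierCoeff (f p) n * (starRingEnd ℂ) (fourierCoeff (f k) (n - 1))) := by
      funext n
      ring
    rw [e] at H
    have e2 : ip (f p) (shift fun x => (u x : ℂ) * f k x)
        - (ip (f p) (shift fun x => (u x : ℂ) * f k x) - fourierCoeff (f p) 0
          * (starRingEnd ℂ) (fourierCoeff (fun x => (u x : ℂ) * f k x) (-1)))
        = fourierCoeff (f p) 0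
          * (starRingEnd ℂ) (fourierCoeff (fun x => (u x : ℂ) * f k x) (-1)) := by ring
    rwa [e2] at H
  have key : ((1 : ℂ) + (lam k : ℂ) - (lam p : ℂ)) * ip (f p) (shift (f k))
      = fourierCoeff (f p) 0
        * (starRingEnd ℂ) (fourierCoeff (fun x => (u x : ℂ) * f k x) (-1)) :=
    (h1.mul_left _).unique h5
  -- rewrite the right-hand side of the goal
  have hone : ip (f p) one = fourierCoeff (f p) 0 := ip_one (f p)
  have hush : ip (fun x => (u x : ℂ)) (shift (f k))
      = (starRingEnd ℂ) (fourierCoeff (fun x => (u x : ℂ) * f k x) (-1)) := by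
    have := ip_u_shift (fun x => (u x : ℂ)) (f k)
    rw [this]
    congr 1
    refine fourierCoeff_congr_ae (Filter.Eventually.of_forall fun x => ?_) _
    rw [Complex.conj_ofReal]
  rw [hone, hush]
  linear_combination -key

end BO
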